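/- If A, B ∈ ℂ^{m×m} satisfy σ̄(A)·σ̄(B) < 1, where σ̄ denotes the largest singular value (operator 2-norm), then SG(A) ∩ SG†(B) = ∅, and consequently det(I − AB) ≠ 0. -/

import Mathlib

open Matrix Complex

/-- Euclidean norm of a complex vector. -/
noncomputable def enorm' {m : ℕ} (x : Fin m → ℂ) : ℝ :=
  Real.sqrt (∑ i, Complex.normSq (x i))

/-- Real inner product Re(x* y). -/
noncomputable def rinner {m : ℕ} (x y : Fin m → ℂ) : ℝ :=
  (∑ i, (starRingEnd ℂ) (x i) * y i).re

/-- The gain γ(x, y) = ‖y‖₂ / ‖x‖₂. -/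
noncomputable def gain {m : ℕ} (x y : Fin m → ℂ) : ℝ := enorm' y / enorm' x

/-- The phase θ(x, y) = arccos(Re(x* y)/(‖x‖₂‖y‖₂)) ∈ [0, π]. -/
noncomputable def phase {m : ℕ} (x y : Fin m → ℂ) : ℝ :=
  Real.arccos (rinner x y / (enorm' x * enorm' y))

/-- The point γ(x,y)·e^{iθ(x,y)}. -/
noncomputable def sgPoint {m : ℕ} (x y : Fin m → ℂ) : ℂ :=
  (gain x y : ℂ) * Complex.exp (Complex.I * (phase x y : ℂ))

/-- The scaled graph SG(A). -/
noncomputable def SG {m : ℕ} (A : Matrix (Fin m) (Fin m) ℂ) : Set ℂ :=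
  {z | ∃ x : Fin m → ℂ, x ≠ 0 ∧ A.mulVec x ≠ 0 ∧
      (z = sgPoint x (A.mulVec x) ∨ z = (starRingEnd ℂ) (sgPoint x (A.mulVec x)))}

/-- The inverse scaled graph SG†(B). -/
noncomputable def SGdag {m : ℕ} (B : Matrix (Fin m) (Fin m) ℂ) : Set ℂ :=
  {z | ∃ x : Fin m → ℂ, x ≠ 0 ∧ B.mulVec x ≠ 0 ∧
      (z = sgPoint (B.mulVec x) x ∨ z = (starRingEnd ℂ) (sgPoint (B.mulVec x) x))}

/-!
Every point of `SG A` has modulus `‖Ax‖/‖x‖ ≤ σ̄(A)`, while every point of `SG† B` has modulus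
`‖x‖/‖Bx‖ ≥ 1/σ̄(B)`; when `σ̄(A) σ̄(B) < 1` these ranges of moduli are disjoint. If `I - AB` were
singular, a vector `v ≠ 0` with `ABv = v` would make `γ(Bv, v) e^{iθ(Bv, v)}` a common point,
taking `x = Bv` in `SG A` and `x = v` in `SG† B`.
-/

section

variable {m : ℕ}

lemma enorm'_eq_norm_toLp (x : Fin m → ℂ) : enorm' x = ‖WithLp.toLp 2 x‖ := by
  simp only [enorm', EuclideanSpace.norm_eq, Complex.normSq_eq_norm_sq]

lemma enorm'_nonneg (x : Fin m → ℂ) : 0 ≤ enorm' x := Real.sqrt_nonneg _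

lemma enorm'_pos {x : Fin m → ℂ} (hx : x ≠ 0) : 0 < enorm' x := by
  rw [enorm'_eq_norm_toLp, norm_pos_iff]
  simpa using hx

lemma enorm'_mulVec_le (A : Matrix (Fin m) (Fin m) ℂ) (x : Fin m → ℂ) :
    enorm' (A *ᵥ x) ≤ ‖toEuclideanCLM (𝕜 := ℂ) (n := Fin m) A‖ * enorm' x := by
  rw [enorm'_eq_norm_toLp, enorm'_eq_norm_toLp, ← toEuclideanCLM_toLp]
  exact (toEuclideanCLM (𝕜 := ℂ) (n := Fin m) A).le_opNorm _

lemma gain_nonneg (x y : Fin m → ℂ) : 0 ≤ gain x y := div_nonneg (enorm'_nonneg y) (enorm'_nonneg x)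

lemma norm_sgPoint (x y : Fin m → ℂ) : ‖sgPoint x y‖ = gain x y := by
  rw [sgPoint, norm_mul, mul_comm I, Complex.norm_exp_ofReal_mul_I, mul_one, Complex.norm_real,
    Real.norm_of_nonneg (gain_nonneg x y)]

lemma norm_eq_gain_of_eq_sgPoint_or_conj {z : ℂ} {x y : Fin m → ℂ}
    (hz : z = sgPoint x y ∨ z = (starRingEnd ℂ) (sgPoint x y)) : ‖z‖ = gain x y := by
  rcases hz with rfl | rfl <;> simp only [Complex.norm_conj, norm_sgPoint]

lemma norm_le_of_mem_SG {A : Matrix (Fin m) (Fin m) ℂ} {z : ℂ} (hz : z ∈ SG A) :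
    ‖z‖ ≤ ‖toEuclideanCLM (𝕜 := ℂ) (n := Fin m) A‖ := by
  obtain ⟨x, hx, -, hzx⟩ := hz
  rw [norm_eq_gain_of_eq_sgPoint_or_conj hzx, gain, div_le_iff₀ (enorm'_pos hx)]
  exact enorm'_mulVec_le A x

lemma one_le_norm_mul_of_mem_SGdag {B : Matrix (Fin m) (Fin m) ℂ} {z : ℂ} (hz : z ∈ SGdag B) :
    1 ≤ ‖z‖ * ‖toEuclideanCLM (𝕜 := ℂ) (n := Fin m) B‖ := by
  obtain ⟨x, hx, hBx, hzx⟩ := hz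
  have hBx_pos := enorm'_pos hBx
  calc 1 = enorm' (B *ᵥ x) / enorm' (B *ᵥ x) := (div_self hBx_pos.ne').symm
    _ ≤ ‖toEuclideanCLM (𝕜 := ℂ) (n := Fin m) B‖ * enorm' x / enorm' (B *ᵥ x) := by
        gcongr
        exact enorm'_mulVec_le B x
    _ = ‖z‖ * ‖toEuclideanCLM (𝕜 := ℂ) (n := Fin m) B‖ := by
        rw [norm_eq_gain_of_eq_sgPoint_or_conj hzx, gain]
        ring

lemma SG_inter_SGdag_eq_empty {A B : Matrix (Fin m) (Fin m) ℂ}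
    (h : ‖toEuclideanCLM (𝕜 := ℂ) (n := Fin m) A‖ *
         ‖toEuclideanCLM (𝕜 := ℂ) (n := Fin m) B‖ < 1) :
    SG A ∩ SGdag B = ∅ := by
  refine Set.eq_empty_of_forall_notMem fun z ⟨hzA, hzB⟩ => h.not_ge ?_
  calc 1 ≤ ‖z‖ * ‖toEuclideanCLM (𝕜 := ℂ) (n := Fin m) B‖ := one_le_norm_mul_of_mem_SGdag hzB
    _ ≤ _ := by gcongr; exact norm_le_of_mem_SG hzA

lemma sgPoint_mem_SG_inter_SGdag {A B : Matrix (Fin m) (Fin m) ℂ} {v : Fin m → ℂ}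
    (hv : v ≠ 0) (hABv : A *ᵥ B *ᵥ v = v) : sgPoint (B *ᵥ v) v ∈ SG A ∩ SGdag B := by
  have hBv : B *ᵥ v ≠ 0 := fun h0 => hv (by rw [← hABv, h0, mulVec_zero])
  exact ⟨⟨B *ᵥ v, hBv, by rwa [hABv], Or.inl (by rw [hABv])⟩, ⟨v, hv, hBv, Or.inl rfl⟩⟩

lemma SG_inter_SGdag_nonempty_of_det_eq_zero {A B : Matrix (Fin m) (Fin m) ℂ}
    (hdet : (1 - A * B).det = 0) : (SG A ∩ SGdag B).Nonempty := by
  obtain ⟨v, hv, hv0⟩ := exists_mulVec_eq_zero_iff.mpr hdet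
  rw [sub_mulVec, one_mulVec, sub_eq_zero, ← mulVec_mulVec] at hv0
  exact ⟨_, sgPoint_mem_SG_inter_SGdag hv hv0.symm⟩

end

theorem small_gain_separation {m : ℕ} (A B : Matrix (Fin m) (Fin m) ℂ)
    (h : ‖Matrix.toEuclideanCLM (𝕜 := ℂ) (n := Fin m) A‖ *
         ‖Matrix.toEuclideanCLM (𝕜 := ℂ) (n := Fin m) B‖ < 1) :
    SG A ∩ SGdag B = ∅ ∧ (1 - A * B).det ≠ 0 := by
  have hempty := SG_inter_SGdag_eq_empty h
  refine ⟨hempty, fun hdet => ?_⟩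
  simpa [hempty] using SG_inter_SGdag_nonempty_of_det_eq_zero hdet
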